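/- arXiv:1904.11721 — 6 statements merged into one kernel-verified Lean document; each statement's English description precedes it below -/
import Mathlib

section
/- In a modular lattice L, suppose a < b and there exists i ∈ L with i ∨ a < i ∨ b and i ∧ a < i ∧ b. Then the element c := (i ∧ b) ∨ a satisfies a < c < b, i ∨ c = i ∨ a, and i ∧ c = i ∧ b. -/
theorem stmt_5 {L : Type*} [Lattice L] [IsModularLattice L] (a b i : L)
    (hab : a < b) (hj : i ⊔ a < i ⊔ b) (hm : i ⊓ a < i ⊓ b) :
    a < (i ⊓ b) ⊔ a ∧ (i ⊓ b) ⊔ a < b ∧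
      i ⊔ ((i ⊓ b) ⊔ a) = i ⊔ a ∧ i ⊓ ((i ⊓ b) ⊔ a) = i ⊓ b := by
  have hsup : i ⊔ ((i ⊓ b) ⊔ a) = i ⊔ a := by
    rw [← sup_assoc, sup_inf_self]
  have hinf : i ⊓ ((i ⊓ b) ⊔ a) = i ⊓ b := by
    have h' : (i ⊓ b) ⊔ (a ⊓ i) = ((i ⊓ b) ⊔ a) ⊓ i :=
      (sup_inf_assoc_of_le a inf_le_left).symm
    rw [inf_comm, ← h', sup_eq_left.2 (by rw [inf_comm]; exact inf_le_inf_left i hab.le)]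
  refine ⟨?_, ?_, hsup, hinf⟩
  · refine lt_of_le_of_ne le_sup_right fun h => hm.ne ?_
    have : i ⊓ b ≤ a := by rw [h]; exact le_sup_left
    exact le_antisymm hm.le (le_inf inf_le_left this)
  · refine lt_of_le_of_ne (sup_le inf_le_right hab.le) fun h => hj.ne ?_
    rw [← hsup, h]
end

section
/- Let L be a distributive lattice and let a < b be such that there is no pair x, y ∈ L with a < x < y < b. Then the open interval M(a,b) = {c ∈ L : a < c < b} contains at most two elements. -/
theorem stmt_8 {L : Type*} [DistribLattice L] (a b : L)
    (hab : a < b) (hno : ¬∃ x y : L, a < x ∧ x < y ∧ y < b) :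
    ∀ c₁ c₂ c₃ : L, c₁ ∈ {c : L | a < c ∧ c < b} → c₂ ∈ {c : L | a < c ∧ c < b} →
      c₃ ∈ {c : L | a < c ∧ c < b} → c₁ = c₂ ∨ c₁ = c₃ ∨ c₂ = c₃ := by
  intro c₁ c₂ c₃ h1 h2 h3
  by_contra h
  push_neg at h
  obtain ⟨h12, h13, h23⟩ := h
  have incomp : ∀ c d : L, c ∈ {c : L | a < c ∧ c < b} → d ∈ {c : L | a < c ∧ c < b} →
      c ≠ d → ¬ c ≤ d := by
    intro c d hc hd hne hle
    exact hno ⟨c, d, hc.1, lt_of_le_of_ne hle hne, hd.2⟩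
  have hsup : ∀ c d : L, c ∈ {c : L | a < c ∧ c < b} → d ∈ {c : L | a < c ∧ c < b} →
      c ≠ d → c ⊔ d = b := by
    intro c d hc hd hne
    have hlt : c < c ⊔ d := lt_of_le_of_ne le_sup_left
      (fun h => incomp d c hd hc (Ne.symm hne) (h ▸ le_sup_right))
    have hle : c ⊔ d ≤ b := sup_le hc.2.le hd.2.le
    rcases lt_or_eq_of_le hle with h' | h'
    · exact absurd ⟨c, c ⊔ d, hc.1, hlt, h'⟩ hno
    · exact h'
  have hinf : ∀ c d : L, c ∈ {c : L | a < c ∧ c < b} → d ∈ {c : L | a < c ∧ c < b} →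
      c ≠ d → c ⊓ d = a := by
    intro c d hc hd hne
    have hlt : c ⊓ d < c := lt_of_le_of_ne inf_le_left
      (fun h => incomp c d hc hd hne (h ▸ inf_le_right))
    have hle : a ≤ c ⊓ d := le_inf hc.1.le hd.1.le
    rcases lt_or_eq_of_le hle with h' | h'
    · exact absurd ⟨c ⊓ d, c, h', hlt, hc.2⟩ hno
    · exact h'.symm
  have : c₁ = b := by
    have := sup_inf_left c₁ c₂ c₃
    rw [hinf c₂ c₃ h2 h3 h23, hsup c₁ c₂ h1 h2 h12, hsup c₁ c₃ h1 h3 h13,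
      sup_of_le_left h1.1.le, inf_idem] at this
    exact this
  exact absurd this h1.2.ne
end

section
/- Let L be a modular lattice, let a < b with a ⋖ c ⋖ b for some c, and for c ∈ M(a,b) := {x : a < x < b} define S(c) = {x ∈ L : x ∨ a = x ∨ c and x ∧ b = x ∧ c}. Then for distinct c₁, c₂ ∈ M(a,b), the sets S(c₁) and S(c₂) are disjoint. -/
theorem stmt_9 {L : Type*} [Lattice L] [IsModularLattice L] (a b : L)
    (hab : a < b) (hc : ∃ c : L, a ⋖ c ∧ c ⋖ b)
    (c₁ c₂ : L) (hc₁ : a < c₁ ∧ c₁ < b) (hc₂ : a < c₂ ∧ c₂ < b) (hne : c₁ ≠ c₂) :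
    {x : L | x ⊔ a = x ⊔ c₁ ∧ x ⊓ b = x ⊓ c₁} ∩
      {x : L | x ⊔ a = x ⊔ c₂ ∧ x ⊓ b = x ⊓ c₂} = ∅ := by
  ext x
  simp only [Set.mem_inter_iff, Set.mem_setOf_eq, Set.mem_empty_iff_false, iff_false]
  intro h
  obtain ⟨⟨h1, h2⟩, h3, h4⟩ := h
  apply hne
  have key : ∀ c : L, c < b → x ⊔ a = x ⊔ c → x ⊓ b = x ⊓ c → c = (x ⊔ a) ⊓ b := by
    intro c hcb hs hi
    have : c ⊔ x ⊓ b = c := by rw [hi, sup_eq_left]; exact inf_le_right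
    rw [← this, ← sup_inf_assoc_of_le x hcb.le, sup_comm c x, ← hs]
  rw [key c₁ hc₁.2 h1 h2, key c₂ hc₂.2 h3 h4]
end

section
/- Let L be a modular lattice and let a < b be such that there is no pair x, y with a < x < y < b. Then the family consisting of {j : j ∨ a = j ∨ b}, {k : k ∧ a = k ∧ b}, and the sets S(c) = {x : x ∨ a = x ∨ c, x ∧ b = x ∧ c} for c ∈ M(a,b) = {x : a < x < b}, forms a partition of L: these sets are pairwise disjoint and their union is all of L. -/
theorem stmt_10 {L : Type*} [Lattice L] [IsModularLattice L] (a b : L)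
    (hab : a < b) (hno : ¬∃ x y : L, a < x ∧ x < y ∧ y < b) :
    (∀ x : L, (x ⊔ a = x ⊔ b) ∨ (x ⊓ a = x ⊓ b) ∨
        ∃ c : L, a < c ∧ c < b ∧ x ⊔ a = x ⊔ c ∧ x ⊓ b = x ⊓ c) ∧
    (∀ x : L, ¬(x ⊔ a = x ⊔ b ∧ x ⊓ a = x ⊓ b)) ∧
    (∀ x c : L, a < c → c < b → x ⊔ a = x ⊔ c → x ⊓ b = x ⊓ c →
        ¬(x ⊔ a = x ⊔ b) ∧ ¬(x ⊓ a = x ⊓ b)) ∧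
    (∀ x c₁ c₂ : L, a < c₁ → c₁ < b → a < c₂ → c₂ < b → c₁ ≠ c₂ →
        ¬(x ⊔ a = x ⊔ c₁ ∧ x ⊓ b = x ⊓ c₁ ∧ x ⊔ a = x ⊔ c₂ ∧ x ⊓ b = x ⊓ c₂)) := by
  -- Key modular fact: if a ≤ c and x ⊔ a = x ⊔ c then c = a ⊔ (x ⊓ c)
  have key : ∀ x c : L, a ≤ c → x ⊔ a = x ⊔ c → c = a ⊔ x ⊓ c := by
    intro x c hac h
    have hc : c ≤ x ⊔ a := h ▸ le_sup_right
    have hm := sup_inf_assoc_of_le (x := a) x hac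
    calc c = (a ⊔ x) ⊓ c := by rw [sup_comm a x, inf_eq_right.2 hc]
    _ = a ⊔ x ⊓ c := hm
  refine ⟨?_, ?_, ?_, ?_⟩
  · intro x
    set c := a ⊔ x ⊓ b with hc
    have hac : a ≤ c := le_sup_left
    have hcb : c ≤ b := sup_le hab.le inf_le_right
    rcases eq_or_lt_of_le hac with h1 | h1
    · -- c = a : x ⊓ b ≤ a, so x ⊓ a = x ⊓ b
      right; left
      have hxb : x ⊓ b ≤ a := le_sup_right.trans h1.ge
      exact le_antisymm (inf_le_inf_left x hab.le) (le_inf inf_le_left hxb)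
    rcases eq_or_lt_of_le hcb with h2 | h2
    · -- c = b : b ≤ x ⊔ a
      left
      have hb : b ≤ x ⊔ a := h2 ▸ sup_le le_sup_right (inf_le_left.trans le_sup_left)
      exact le_antisymm (sup_le_sup_left hab.le x) (sup_le le_sup_left hb)
    · right; right
      refine ⟨c, h1, h2, ?_, ?_⟩
      · exact le_antisymm (sup_le_sup_left hac x)
          (sup_le le_sup_left (sup_le le_sup_right (inf_le_left.trans le_sup_left)))
      · exact le_antisymm (le_inf inf_le_left le_sup_right) (inf_le_inf_left x hcb)
  · rintro x ⟨hs, hi⟩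
    have hbb := key x b hab.le hs
    rw [← hi] at hbb
    have : b ≤ a := hbb.le.trans (sup_le le_rfl inf_le_right)
    exact absurd this hab.not_ge
  · intro x c hac hcb hs hi
    have hcc := key x c hac.le hs
    constructor
    · intro hsb
      have hbb := key x b hab.le hsb
      rw [← hi] at hcc
      exact absurd (hbb.trans hcc.symm).le hcb.not_ge
    · intro hib
      have h4 : x ⊓ c ≤ a := by rw [← hi, ← hib]; exact inf_le_right
      have : c ≤ a := hcc.le.trans (sup_le le_rfl h4)
      exact absurd this hac.not_ge
  · rintro x c₁ c₂ h1 h1' h2 h2' hne ⟨hs1, hi1, hs2, hi2⟩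
    have e1 := key x c₁ h1.le hs1
    have e2 := key x c₂ h2.le hs2
    rw [← hi1] at e1
    rw [← hi2] at e2
    exact hne (e1.trans e2.symm)
end

section
/- Let L be a finite distributive lattice, a ⋖ b a covering pair in L, and ε₁, ε₂ : L → ℝ≥0 two probability mass functions (each summing to 1). Define the 'join convolution' ε⁻(j) = Σ_{k∨l=j} ε₁(k)·ε₂(l). Define β(ε) = Σ_{j : j∧a = j∧b} ε(j). Then β(ε⁻) = β(ε₁)·β(ε₂). -/
open Finset

noncomputable def betaSum {L : Type*} [Lattice L] [Fintype L] [DecidableEq L]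
    (a b : L) (ε : L → NNReal) : NNReal :=
  ∑ j ∈ univ.filter (fun j => j ⊓ a = j ⊓ b), ε j

noncomputable def joinConv {L : Type*} [Lattice L] [Fintype L] [DecidableEq L]
    (ε₁ ε₂ : L → NNReal) (j : L) : NNReal :=
  ∑ p ∈ univ.filter (fun p : L × L => p.1 ⊔ p.2 = j), ε₁ p.1 * ε₂ p.2

lemma key {L : Type*} [DistribLattice L] {a b j k : L} (hle : a ≤ b) :
    (j ⊔ k) ⊓ a = (j ⊔ k) ⊓ b ↔ (j ⊓ a = j ⊓ b ∧ k ⊓ a = k ⊓ b) := by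
  constructor
  · intro h
    constructor
    · refine le_antisymm (inf_le_inf_left j hle) ?_
      have : j ⊓ b ≤ (j ⊔ k) ⊓ a := h ▸ inf_le_inf_right b le_sup_left
      exact le_inf inf_le_left (this.trans inf_le_right)
    · refine le_antisymm (inf_le_inf_left k hle) ?_
      have : k ⊓ b ≤ (j ⊔ k) ⊓ a := h ▸ inf_le_inf_right b le_sup_right
      exact le_inf inf_le_left (this.trans inf_le_right)
  · rintro ⟨h1, h2⟩
    rw [inf_sup_right, inf_sup_right, h1, h2]

theorem stmt_11 {L : Type*} [DistribLattice L] [Fintype L] [DecidableEq L]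
    (a b : L) (hab : a ⋖ b) (ε₁ ε₂ : L → NNReal)
    (h₁ : ∑ j, ε₁ j = 1) (h₂ : ∑ j, ε₂ j = 1) :
    betaSum a b (joinConv ε₁ ε₂) = betaSum a b ε₁ * betaSum a b ε₂ := by
  have hle : a ≤ b := hab.le
  unfold betaSum joinConv
  rw [Finset.sum_mul_sum, ← Finset.sum_product',
    Finset.sum_fiberwise_eq_sum_filter univ (univ.filter fun j => j ⊓ a = j ⊓ b)
      (fun p : L × L => p.1 ⊔ p.2) (fun p => ε₁ p.1 * ε₂ p.2)]
  apply Finset.sum_congr _ (fun _ _ => rfl)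
  ext p
  simp [key hle, Finset.mem_product]
end

section
/- Let L be a finite distributive lattice, a ⋖ b a covering pair with M(a,b) = {x : a < x < b}, and ε₁, ε₂ : L → ℝ≥0 probability mass functions. With θ(ε) = Σ_{j∨a=j∨b} ε(j), β(ε) = Σ_{j∧a=j∧b} ε(j), χ_c(ε) = Σ_{j : j∨a=j∨c, j∧b=j∧c} ε(j), ε⁻(j) = Σ_{k∨l=j} ε₁(k)ε₂(l), ε⁺(j) = Σ_{k∧l=j} ε₁(k)ε₂(l), and C = Σ_{c₁≠c₂ ∈ M(a,b)} χ_{c₁}(ε₁)·χ_{c₂}(ε₂), it holds that θ(ε⁻) + θ(ε⁺) = θ(ε₁) + θ(ε₂) + C and β(ε⁻) + β(ε⁺) = β(ε₁) + β(ε₂) + C. -/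
open Finset
open scoped Classical

noncomputable def thetaSum {L : Type*} [Lattice L] [Fintype L] [DecidableEq L]
    (a b : L) (ε : L → NNReal) : NNReal :=
  ∑ j ∈ univ.filter (fun j => j ⊔ a = j ⊔ b), ε j

noncomputable def chiSum {L : Type*} [Lattice L] [Fintype L] [DecidableEq L]
    (a b c : L) (ε : L → NNReal) : NNReal :=
  ∑ j ∈ univ.filter (fun j => j ⊔ a = j ⊔ c ∧ j ⊓ b = j ⊓ c), ε j

noncomputable def meetConv {L : Type*} [Lattice L] [Fintype L] [DecidableEq L]
    (ε₁ ε₂ : L → NNReal) (j : L) : NNReal :=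
  ∑ p ∈ univ.filter (fun p : L × L => p.1 ⊓ p.2 = j), ε₁ p.1 * ε₂ p.2

/-- The cross term `C` over distinct pairs of intermediate elements of `M(a,b)`. -/
noncomputable def crossTerm {L : Type*} [Lattice L] [Fintype L] [DecidableEq L]
    (a b : L) (ε₁ ε₂ : L → NNReal) : NNReal :=
  ∑ p ∈ univ.filter
      (fun p : L × L => a < p.1 ∧ p.1 < b ∧ a < p.2 ∧ p.2 < b ∧ p.1 ≠ p.2),
    chiSum a b p.1 ε₁ * chiSum a b p.2 ε₂


section aux

variable {L : Type*} [DistribLattice L]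

lemma sup_cond_iff {a b : L} (hab : a ≤ b) (j : L) : j ⊔ a = j ⊔ b ↔ b ≤ j ⊔ a := by
  constructor
  · intro h; rw [h]; exact le_sup_right
  · intro h; exact le_antisymm (sup_le_sup_left hab j) (sup_le le_sup_left h)

lemma inf_cond_iff {a b : L} (hab : a ≤ b) (j : L) : j ⊓ a = j ⊓ b ↔ j ⊓ b ≤ a := by
  constructor
  · intro h; rw [← h]; exact inf_le_right
  · intro h; exact le_antisymm (inf_le_inf_left j hab) (le_inf inf_le_left h)

lemma theta_join_iff {a b : L} (hab : a ⋖ b) (k l : L) :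
    (k ⊔ l) ⊔ a = (k ⊔ l) ⊔ b ↔ (k ⊔ a = k ⊔ b ∨ l ⊔ a = l ⊔ b) := by
  rw [sup_cond_iff hab.le, sup_cond_iff hab.le, sup_cond_iff hab.le]
  constructor
  · intro h
    have hx : a ≤ (k ⊔ a) ⊓ b := le_inf le_sup_right hab.le
    have hy : a ≤ (l ⊔ a) ⊓ b := le_inf le_sup_right hab.le
    have hxy : ((k ⊔ a) ⊓ b) ⊔ ((l ⊔ a) ⊓ b) = b := by
      rw [← inf_sup_right]
      have he : (k ⊔ a) ⊔ (l ⊔ a) = (k ⊔ l) ⊔ a := by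
        rw [sup_sup_sup_comm, sup_idem]
      rw [he]
      exact inf_eq_right.mpr h
    rcases hab.eq_or_eq hx inf_le_right with h1 | h1
    · rcases hab.eq_or_eq hy inf_le_right with h2 | h2
      · exfalso; rw [h1, h2, sup_idem] at hxy; exact hab.lt.ne hxy
      · exact Or.inr (le_trans (le_of_eq h2.symm) inf_le_left)
    · exact Or.inl (le_trans (le_of_eq h1.symm) inf_le_left)
  · rintro (h | h)
    · exact le_trans h (sup_le_sup_right le_sup_left a)
    · exact le_trans h (sup_le_sup_right le_sup_right a)

lemma theta_meet_iff {a b : L} (hab : a ≤ b) (k l : L) :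
    (k ⊓ l) ⊔ a = (k ⊓ l) ⊔ b ↔ (k ⊔ a = k ⊔ b ∧ l ⊔ a = l ⊔ b) := by
  rw [sup_cond_iff hab, sup_cond_iff hab, sup_cond_iff hab, sup_inf_right, le_inf_iff]

lemma beta_join_iff {a b : L} (hab : a ≤ b) (k l : L) :
    (k ⊔ l) ⊓ a = (k ⊔ l) ⊓ b ↔ (k ⊓ a = k ⊓ b ∧ l ⊓ a = l ⊓ b) := by
  rw [inf_cond_iff hab, inf_cond_iff hab, inf_cond_iff hab, inf_sup_right, sup_le_iff]

lemma beta_meet_iff {a b : L} (hab : a ⋖ b) (k l : L) :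
    (k ⊓ l) ⊓ a = (k ⊓ l) ⊓ b ↔ (k ⊓ a = k ⊓ b ∨ l ⊓ a = l ⊓ b) := by
  rw [inf_cond_iff hab.le, inf_cond_iff hab.le, inf_cond_iff hab.le]
  constructor
  · intro h
    have hx : ((k ⊓ b) ⊔ a) ≤ b := sup_le inf_le_right hab.le
    have hy : ((l ⊓ b) ⊔ a) ≤ b := sup_le inf_le_right hab.le
    have hxy : ((k ⊓ b) ⊔ a) ⊓ ((l ⊓ b) ⊔ a) = a := by
      rw [← sup_inf_right]
      have : (k ⊓ b) ⊓ (l ⊓ b) ≤ a := le_trans (by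
        refine le_trans ?_ h
        apply le_inf
        · exact le_inf (inf_le_of_left_le inf_le_left) (inf_le_of_right_le inf_le_left)
        · exact inf_le_of_left_le inf_le_right) le_rfl
      exact sup_eq_right.mpr this
    rcases hab.eq_or_eq le_sup_right hx with h1 | h1
    · exact Or.inl (le_sup_left.trans h1.le)
    · rcases hab.eq_or_eq le_sup_right hy with h2 | h2
      · exact Or.inr (le_sup_left.trans h2.le)
      · exfalso; rw [h1, h2, inf_idem] at hxy; exact hab.lt.ne' hxy
  · rintro (h | h)
    · exact le_trans (inf_le_inf_right b inf_le_left) h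
    · exact le_trans (inf_le_inf_right b inf_le_right) h

end aux

section sums

variable {L : Type*} [Fintype L] [DecidableEq L]

lemma fiber_sum (P : L → Prop) [DecidablePred P] (g : L × L → L) (f : L × L → NNReal) :
    ∑ j ∈ univ.filter P, ∑ p ∈ univ.filter (fun p => g p = j), f p
      = ∑ p : L × L, if P (g p) then f p else 0 := by
  simp only [Finset.sum_filter]
  have h1 : ∀ j : L, (if P j then (∑ p : L × L, if g p = j then f p else 0) else 0)
      = ∑ p : L × L, if g p = j then (if P j then f p else 0) else 0 := by
    intro j; split <;> simp
  simp only [h1]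
  rw [Finset.sum_comm]
  refine Finset.sum_congr rfl fun p _ => ?_
  rw [Finset.sum_ite_eq univ (g p) (fun j => if P j then f p else 0)]
  simp

lemma fst_sum (P : L → Prop) [DecidablePred P] (ε₁ ε₂ : L → NNReal) (h₂ : ∑ j, ε₂ j = 1) :
    ∑ p : L × L, (if P p.1 then ε₁ p.1 * ε₂ p.2 else 0)
      = ∑ k ∈ univ.filter P, ε₁ k := by
  rw [Fintype.sum_prod_type, Finset.sum_filter]
  refine Finset.sum_congr rfl fun k _ => ?_
  split
  · show ∑ x : L, ε₁ k * ε₂ x = ε₁ k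
    rw [← Finset.mul_sum, h₂, mul_one]
  · simp

lemma snd_sum (P : L → Prop) [DecidablePred P] (ε₁ ε₂ : L → NNReal) (h₁ : ∑ j, ε₁ j = 1) :
    ∑ p : L × L, (if P p.2 then ε₁ p.1 * ε₂ p.2 else 0)
      = ∑ k ∈ univ.filter P, ε₂ k := by
  rw [Fintype.sum_prod_type_right, Finset.sum_filter]
  refine Finset.sum_congr rfl fun k _ => ?_
  split
  · show ∑ x : L, ε₁ x * ε₂ k = ε₂ k
    rw [← Finset.sum_mul, h₁, one_mul]
  · simp

end sums

theorem stmt_19 {L : Type*} [DistribLattice L] [Fintype L] [DecidableEq L]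
    (a b : L) (hab : a ⋖ b) (ε₁ ε₂ : L → NNReal)
    (h₁ : ∑ j, ε₁ j = 1) (h₂ : ∑ j, ε₂ j = 1) :
    thetaSum a b (joinConv ε₁ ε₂) + thetaSum a b (meetConv ε₁ ε₂)
        = thetaSum a b ε₁ + thetaSum a b ε₂ + crossTerm a b ε₁ ε₂ ∧
    betaSum a b (joinConv ε₁ ε₂) + betaSum a b (meetConv ε₁ ε₂)
        = betaSum a b ε₁ + betaSum a b ε₂ + crossTerm a b ε₁ ε₂ := by
  classical
  have hcross : crossTerm a b ε₁ ε₂ = 0 := by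
    unfold crossTerm
    apply Finset.sum_eq_zero
    intro p hp
    simp only [Finset.mem_filter, Finset.mem_univ, true_and] at hp
    exact absurd hp.2.1 (hab.2 hp.1)
  have key : ∀ (P : L → Prop) (_ : DecidablePred P),
      (∀ k l, ((P (k ⊔ l) ↔ P k ∨ P l) ∧ (P (k ⊓ l) ↔ P k ∧ P l)) ∨
        ((P (k ⊔ l) ↔ P k ∧ P l) ∧ (P (k ⊓ l) ↔ P k ∨ P l))) →
      (∑ j ∈ univ.filter P, joinConv ε₁ ε₂ j) + (∑ j ∈ univ.filter P, meetConv ε₁ ε₂ j)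
        = (∑ j ∈ univ.filter P, ε₁ j) + (∑ j ∈ univ.filter P, ε₂ j) := by
    intro P _ hyp
    unfold joinConv meetConv
    rw [fiber_sum P (fun p => p.1 ⊔ p.2), fiber_sum P (fun p => p.1 ⊓ p.2),
        ← fst_sum P ε₁ ε₂ h₂, ← snd_sum P ε₁ ε₂ h₁,
        ← Finset.sum_add_distrib, ← Finset.sum_add_distrib]
    refine Finset.sum_congr rfl fun p _ => ?_
    rcases hyp p.1 p.2 with ⟨hor, hand⟩ | ⟨hand, hor⟩ <;>
      by_cases hk : P p.1 <;> by_cases hl : P p.2 <;>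
      simp [hor, hand, hk, hl]
  constructor
  · rw [hcross, add_zero]
    exact key (fun j => j ⊔ a = j ⊔ b) inferInstance
      (fun k l => Or.inl ⟨theta_join_iff hab k l, theta_meet_iff hab.le k l⟩)
  · rw [hcross, add_zero]
    exact key (fun j => j ⊓ a = j ⊓ b) inferInstance
      (fun k l => Or.inr ⟨beta_join_iff hab.le k l, beta_meet_iff hab k l⟩)
end
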